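/- arXiv:1009.1254 — 2 statements merged into one kernel-verified Lean document; each statement's English description precedes it below -/
import Mathlib

section
/- Let 𝒩 = {1, …, N}, let R_1, …, R_N ≥ 0, and suppose there exists a permutation π̃ of 𝒩 such that for every nonempty subset S ⊆ 𝒩 the maximum of f^i_S R_i over i ∈ S is attained at the element i_S ∈ S minimizing π̃(i), i.e., f^{i_S}_S R_{i_S} = max_{i∈S} f^i_S R_i where π̃(i_S) = min_{i∈S} π̃(i). Then Σ_{∅ ≠ S ⊆ 𝒩} max_{i∈S} (f^i_S R_i) = Σ_{j=1}^N R_{π̃^{-1}(j)} / (1 − ε_{{π̃^{-1}(1), …, π̃^{-1}(j)}}). -/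
/-!
Every nonempty `S ⊆ 𝒩` is uniquely `insert i T` with `i` its `π`-least element and `T` a subset
of `U_i = {k | π i < π k}`; by hypothesis the maximum over `S` is then `f^i_S R_i`. For fixed `i`,
since `(𝒩 ∖ T) ∪ H = 𝒩 ∖ (T ∖ H)`, the sum `∑_{T ⊆ U_i} f^i_{insert i T}` is Möbius inversion
on the Boolean lattice of subsets of `U_i` and collapses to `1 / (1 - ε_{𝒩 ∖ U_i})`, where
`𝒩 ∖ U_i` consists of the first `π i` elements in the `π`-order.
-/

open Finset

/-- The explicit formula `f^i_S := ∑_{H ⊆ S∖{i}} (−1)^{|H|} / (1 − ε_{(𝒩∖(S∖{i}))∪H})`. -/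
noncomputable def fcoef {N : Type*} [Fintype N] [DecidableEq N]
    (ε : Finset N → ℝ) (i : N) (S : Finset N) : ℝ :=
  ∑ H ∈ (S.erase i).powerset, (-1 : ℝ) ^ H.card / (1 - ε ((S.erase i)ᶜ ∪ H))

namespace Finset

variable {α M : Type*} [DecidableEq α]

lemma sum_powerset_sum_powerset_sdiff [AddCommMonoid M] (U : Finset α)
    (φ : Finset α → Finset α → M) :
    ∑ T ∈ U.powerset, ∑ H ∈ T.powerset, φ H (T \ H)
      = ∑ W ∈ U.powerset, ∑ H ∈ (U \ W).powerset, φ H W := by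
  rw [sum_sigma', sum_sigma']
  refine sum_nbij' (fun p => ⟨p.1 \ p.2, p.2⟩) (fun q => ⟨q.1 ∪ q.2, q.2⟩) ?_ ?_ ?_ ?_ ?_
  · rintro ⟨T, H⟩ hp
    simp only [mem_sigma, mem_powerset, subset_sdiff] at hp ⊢
    exact ⟨sdiff_subset.trans hp.1, hp.2.trans hp.1, disjoint_sdiff⟩
  · rintro ⟨W, H⟩ hq
    simp only [mem_sigma, mem_powerset, subset_sdiff] at hq ⊢
    exact ⟨union_subset hq.1 hq.2.1, subset_union_right⟩
  · rintro ⟨T, H⟩ hp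
    simp only [mem_sigma, mem_powerset] at hp
    simp [sdiff_union_of_subset hp.2]
  · rintro ⟨W, H⟩ hq
    simp only [mem_sigma, mem_powerset, subset_sdiff] at hq
    simp [union_sdiff_cancel_right hq.2.2.symm]
  · rintro ⟨T, H⟩ _
    rfl

lemma sum_powerset_sum_powerset_neg_one_pow_smul_sdiff [AddCommGroup M] (U : Finset α)
    (g : Finset α → M) :
    ∑ T ∈ U.powerset, ∑ H ∈ T.powerset, (-1 : ℤ) ^ #H • g (T \ H) = g U := by
  rw [sum_powerset_sum_powerset_sdiff U (fun H W => (-1 : ℤ) ^ #H • g W)]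
  simp_rw [← sum_smul, sum_powerset_neg_one_pow_card, sdiff_eq_empty_iff_subset]
  rw [sum_eq_single_of_mem U (mem_powerset_self U)]
  · simp
  · intro W hW hWU
    rw [if_neg fun h => hWU (subset_antisymm (mem_powerset.mp hW) h), zero_smul]

end Finset

section

variable {N : Type*} [Fintype N]

lemma notMem_of_subset_filter_key_lt {β : Type*} [LinearOrder β] {key : N → β} {i : N}
    {T : Finset N} (hT : T ⊆ univ.filter fun x => key i < key x) : i ∉ T :=
  fun hi => lt_irrefl _ (mem_filter.mp (hT hi)).2

variable [DecidableEq N]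

lemma key_le_of_mem_insert {β : Type*} [LinearOrder β] {key : N → β} {i k : N} {T : Finset N}
    (hT : T ⊆ univ.filter fun x => key i < key x) (hk : k ∈ insert i T) :
    key i ≤ key k := by
  rcases mem_insert.mp hk with rfl | hk
  · exact le_rfl
  · exact (mem_filter.mp (hT hk)).2.le

lemma sum_powerset_filter_nonempty_eq_sum_sum_powerset_insert {β M : Type*} [LinearOrder β]
    [AddCommMonoid M] (key : N → β) (hkey : Function.Injective key) (G : Finset N → M) :
    ∑ S ∈ univ.powerset.filter Finset.Nonempty, G S
      = ∑ i, ∑ T ∈ (univ.filter fun k => key i < key k).powerset, G (insert i T) := by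
  rw [sum_sigma']
  symm
  refine sum_bij (fun p _ => insert p.1 p.2) ?_ ?_ ?_ ?_
  · intro p _
    simp
  · rintro ⟨i, T⟩ hT ⟨j, T'⟩ hT' hij
    simp only [mem_sigma, mem_univ, true_and, mem_powerset] at hT hT'
    obtain rfl : i = j := hkey <| (key_le_of_mem_insert hT (hij ▸ mem_insert_self j T')).antisymm
      (key_le_of_mem_insert hT' (hij ▸ mem_insert_self i T))
    rw [← erase_insert (notMem_of_subset_filter_key_lt hT), hij,
      erase_insert (notMem_of_subset_filter_key_lt hT')]
  · intro S hS
    obtain ⟨i, hiS, hmin⟩ := exists_min_image S key (mem_filter.mp hS).2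
    refine ⟨⟨i, S.erase i⟩, ?_, insert_erase hiS⟩
    simp only [mem_sigma, mem_univ, mem_powerset, true_and]
    intro k hk
    simp only [mem_filter, mem_univ, true_and]
    exact (hmin k (mem_of_mem_erase hk)).lt_of_ne (hkey.ne (ne_of_mem_erase hk)).symm
  · intro p _
    rfl

lemma fcoef_insert (ε : Finset N → ℝ) {i : N} {T : Finset N} (hi : i ∉ T) :
    fcoef ε i (insert i T) = ∑ H ∈ T.powerset, (-1 : ℤ) ^ #H • (1 - ε (T \ H)ᶜ)⁻¹ := by
  rw [fcoef, erase_insert hi]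
  refine sum_congr rfl fun H _ => ?_
  rw [compl_sdiff, himp_eq, sup_comm, zsmul_eq_mul, div_eq_mul_inv]
  push_cast
  rfl

lemma sum_powerset_fcoef_insert (ε : Finset N → ℝ) {i : N} {U : Finset N} (hi : i ∉ U) :
    ∑ T ∈ U.powerset, fcoef ε i (insert i T) = (1 - ε Uᶜ)⁻¹ := by
  rw [← sum_powerset_sum_powerset_neg_one_pow_smul_sdiff U (fun W => (1 - ε Wᶜ)⁻¹)]
  exact sum_congr rfl fun T hT => fcoef_insert ε fun h => hi (mem_powerset.mp hT h)

end

theorem stmt_13_general {n : ℕ} (ε : Finset (Fin n) → ℝ)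
    (R : Fin n → ℝ) (π : Equiv.Perm (Fin n))
    (hord : ∀ S : Finset (Fin n), S.Nonempty → ∀ iS ∈ S, (∀ j ∈ S, π iS ≤ π j) →
      ∀ i ∈ S, fcoef ε i S * R i ≤ fcoef ε iS S * R iS) :
    ∑ S ∈ ((Finset.univ : Finset (Fin n)).powerset.filter
        (fun S => S.Nonempty)).attach,
        S.1.sup' (Finset.mem_filter.mp S.2).2 (fun i => fcoef ε i S.1 * R i)
      = ∑ j : Fin n, R (π.symm j) / (1 - ε ((Finset.Iic j).image π.symm)) := by
  let G : Finset (Fin n) → ℝ := fun S =>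
    if h : S.Nonempty then S.sup' h (fun i => fcoef ε i S * R i) else 0
  have hG : ∀ i T, (T ⊆ univ.filter fun k => π i < π k) →
      G (insert i T) = fcoef ε i (insert i T) * R i := by
    intro i T hT
    simp only [G, dif_pos (insert_nonempty i T)]
    exact le_antisymm
      (sup'_le _ _ (hord _ (insert_nonempty i T) i (mem_insert_self i T)
        fun _ => key_le_of_mem_insert hT))
      (le_sup' (fun k => fcoef ε k (insert i T) * R k) (mem_insert_self i T))
  have hcompl : ∀ i, (Iic (π i)).image π.symm = (univ.filter fun k => π i < π k)ᶜ := by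
    intro i
    ext k
    simp [π.symm_apply_eq]
  calc _ = ∑ S ∈ univ.powerset.filter Finset.Nonempty, G S := by
        rw [← sum_attach _ G]
        exact sum_congr rfl fun S _ => by simp [G, dif_pos (mem_filter.mp S.2).2]
    _ = ∑ i, ∑ T ∈ (univ.filter fun k => π i < π k).powerset, fcoef ε i (insert i T) * R i := by
        rw [sum_powerset_filter_nonempty_eq_sum_sum_powerset_insert π π.injective]
        exact sum_congr rfl fun i _ => sum_congr rfl fun T hT => hG i T (mem_powerset.mp hT)
    _ = ∑ i, R i / (1 - ε ((Iic (π i)).image π.symm)) := by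
        refine sum_congr rfl fun i _ => ?_
        rw [← sum_mul, sum_powerset_fcoef_insert ε (notMem_of_subset_filter_key_lt subset_rfl),
          hcompl, div_eq_inv_mul]
    _ = _ := Fintype.sum_equiv π _ _ fun i => by rw [π.symm_apply_apply]

/-- If `R ≥ 0` and there is a permutation `π̃` of `𝒩` such that, for every
nonempty `S ⊆ 𝒩`, the maximum of `f^i_S R_i` over `i ∈ S` is attained at the
element of `S` minimizing `π̃`, then
`∑_{∅ ≠ S ⊆ 𝒩} max_{i∈S} (f^i_S R_i)
  = ∑_{j} R_{π̃⁻¹(j)} / (1 − ε_{{π̃⁻¹(1),…,π̃⁻¹(j)}})`. -/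
theorem stmt_13 {n : ℕ} (ε : Finset (Fin n) → ℝ) (hε : ∀ I, ε I ≠ 1)
    (R : Fin n → ℝ) (hR : ∀ i, 0 ≤ R i) (π : Equiv.Perm (Fin n))
    (hord : ∀ S : Finset (Fin n), S.Nonempty → ∀ iS ∈ S, (∀ j ∈ S, π iS ≤ π j) →
      ∀ i ∈ S, fcoef ε i S * R i ≤ fcoef ε iS S * R iS) :
    ∑ S ∈ ((Finset.univ : Finset (Fin n)).powerset.filter
        (fun S => S.Nonempty)).attach,
        S.1.sup' (Finset.mem_filter.mp S.2).2 (fun i => fcoef ε i S.1 * R i)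
      = ∑ j : Fin n, R (π.symm j) / (1 - ε ((Finset.Iic j).image π.symm)) :=
  stmt_13_general ε R π hord
end

section
/- Let 𝒩 = {1, …, N} and suppose the channel is spatially independent with 0 < ε_j < 1 for each j and ε_1 ≥ ε_2 ≥ … ≥ ε_N, where ε_I := ∏_{j∈I} ε_j for every I ⊆ 𝒩. Let R_1, …, R_N > 0 satisfy the one-sided fairness condition ε_1 R_1 ≥ ε_2 R_2 ≥ … ≥ ε_N R_N. Then for every nonempty subset S ⊆ 𝒩, letting m := min S, it holds that f^m_S R_m ≥ f^i_S R_i for every i ∈ S; that is, the maximum of f^i_S R_i over i ∈ S is attained at the smallest index of S. -/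
/-!
Expanding each `1 / (1 - ε_{(S∖{i})ᶜ ∪ H})` as a geometric series and summing over `H` by
inclusion–exclusion gives, for a product channel,
`f^i_S = ∑_k ε_{(S∖{i})ᶜ}^k ∏_{j ∈ S∖{i}} (1 - ε_j^k)`.
For `m ≤ i` in `S`, the `k`-th terms of `f^i_S R_i` and `f^m_S R_m` share the factor
`ε_{Sᶜ}^k ∏_{j ∈ S∖{i,m}} (1 - ε_j^k)`, and what remains is
`ε_i^k R_i (1 - ε_m^k) ≤ ε_m^k R_m (1 - ε_i^k)`, which follows from `ε_i ≤ ε_m` and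
`ε_i R_i ≤ ε_m R_m`. Summing over `k` gives the theorem.
-/

open Finset

lemma Finset.prod_lt_one_of_mem {ι : Type*} {s : Finset ι} {f : ι → ℝ}
    (h0 : ∀ j ∈ s, 0 ≤ f j) (h1 : ∀ j ∈ s, f j ≤ 1) {i : ι} (hi : i ∈ s) (hfi : f i < 1) :
    ∏ j ∈ s, f j < 1 := by
  classical
  rw [← mul_prod_erase s f hi]
  exact mul_lt_one_of_nonneg_of_lt_one_left (h0 i hi) hfi
    (prod_le_one (fun j hj => h0 j (mem_of_mem_erase hj)) fun j hj => h1 j (mem_of_mem_erase hj))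

lemma Finset.prod_one_sub_eq_sum_powerset {ι R : Type*} [CommRing R] [DecidableEq ι]
    (s : Finset ι) (g : ι → R) :
    ∏ j ∈ s, (1 - g j) = ∑ H ∈ s.powerset, (-1) ^ H.card * ∏ j ∈ H, g j := by
  simp only [prod_sub, prod_const_one, mul_one]

lemma pow_mul_one_sub_pow_le {a b Ra Rb : ℝ} (ha : 0 ≤ a) (hab : a ≤ b) (hb : b ≤ 1)
    (hRb : 0 ≤ Rb) (hfair : a * Ra ≤ b * Rb) (k : ℕ) :
    a ^ k * Ra * (1 - b ^ k) ≤ b ^ k * Rb * (1 - a ^ k) := by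
  cases k with
  | zero => simp
  | succ k =>
    have hpow : a ^ k ≤ b ^ k := pow_le_pow_left₀ ha hab k
    have hfair_pow : a ^ (k + 1) * Ra ≤ b ^ (k + 1) * Rb := by
      calc a ^ (k + 1) * Ra = a * Ra * a ^ k := by ring
        _ ≤ b * Rb * b ^ k :=
          mul_le_mul hfair hpow (pow_nonneg ha k) (mul_nonneg (ha.trans hab) hRb)
        _ = b ^ (k + 1) * Rb := by ring
    have hb_pow : b ^ (k + 1) ≤ 1 := pow_le_one₀ (ha.trans hab) hb
    exact mul_le_mul hfair_pow (by linarith [pow_le_pow_left₀ ha hab (k + 1)]) (by linarith)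
      (mul_nonneg (pow_nonneg (ha.trans hab) _) hRb)

section ProductChannel

variable {N : Type*} [Fintype N] [DecidableEq N] {x : N → ℝ}

theorem hasSum_fcoef_prod (hx0 : ∀ j, 0 ≤ x j) (hx1 : ∀ j, x j ≤ 1) {i : N} (hxi : x i < 1)
    (S : Finset N) :
    HasSum (fun k : ℕ => (∏ j ∈ (S.erase i)ᶜ, x j) ^ k * ∏ j ∈ S.erase i, (1 - x j ^ k))
      (fcoef (fun I => ∏ j ∈ I, x j) i S) := by
  have hgeom : ∀ H ∈ (S.erase i).powerset, HasSum
      (fun k : ℕ => (-1 : ℝ) ^ H.card * (∏ j ∈ (S.erase i)ᶜ ∪ H, x j) ^ k)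
      ((-1 : ℝ) ^ H.card / (1 - ∏ j ∈ (S.erase i)ᶜ ∪ H, x j)) := fun H _ => by
    have hlt : ∏ j ∈ (S.erase i)ᶜ ∪ H, x j < 1 :=
      prod_lt_one_of_mem (fun j _ => hx0 j) (fun j _ => hx1 j) (by simp) hxi
    simpa only [div_eq_mul_inv] using
      (hasSum_geometric_of_lt_one (prod_nonneg fun j _ => hx0 j) hlt).mul_left _
  rw [fcoef]
  convert hasSum_sum hgeom using 1
  ext k
  have hdisj : ∀ H ∈ (S.erase i).powerset, Disjoint (S.erase i)ᶜ H := fun H hH =>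
    disjoint_compl_left.mono_right (mem_powerset.mp hH)
  rw [prod_one_sub_eq_sum_powerset, mul_sum]
  refine sum_congr rfl fun H hH => ?_
  rw [prod_union (hdisj H hH), prod_pow]
  ring

lemma series_term_eq_mul {S : Finset N} {i m : N} (hi : i ∈ S) (hm : m ∈ S) (hmi : m ≠ i)
    (k : ℕ) :
    (∏ j ∈ (S.erase i)ᶜ, x j) ^ k * ∏ j ∈ S.erase i, (1 - x j ^ k)
      = x i ^ k * (1 - x m ^ k)
        * ((∏ j ∈ Sᶜ, x j) ^ k * ∏ j ∈ (S.erase i).erase m, (1 - x j ^ k)) := by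
  rw [compl_erase, prod_insert (notMem_compl.mpr hi),
    ← mul_prod_erase _ _ (mem_erase.mpr ⟨hmi, hm⟩)]
  ring

variable {R : N → ℝ}

lemma series_term_mul_le (hx0 : ∀ j, 0 ≤ x j) (hx1 : ∀ j, x j ≤ 1) {S : Finset N} {i m : N}
    (hi : i ∈ S) (hm : m ∈ S) (hx : x i ≤ x m) (hR : x i * R i ≤ x m * R m) (hRm : 0 ≤ R m)
    (k : ℕ) :
    (∏ j ∈ (S.erase i)ᶜ, x j) ^ k * (∏ j ∈ S.erase i, (1 - x j ^ k)) * R i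
      ≤ (∏ j ∈ (S.erase m)ᶜ, x j) ^ k * (∏ j ∈ S.erase m, (1 - x j ^ k)) * R m := by
  obtain rfl | hmi := eq_or_ne m i
  · rfl
  rw [series_term_eq_mul hi hm hmi, series_term_eq_mul hm hi hmi.symm, erase_right_comm]
  have hcommon : 0 ≤ (∏ j ∈ Sᶜ, x j) ^ k * ∏ j ∈ (S.erase m).erase i, (1 - x j ^ k) :=
    mul_nonneg (pow_nonneg (prod_nonneg fun j _ => hx0 j) k)
      (prod_nonneg fun j _ => sub_nonneg.mpr (pow_le_one₀ (hx0 j) (hx1 j)))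
  have key := pow_mul_one_sub_pow_le (hx0 i) hx (hx1 m) hRm hR k
  calc _ = x i ^ k * R i * (1 - x m ^ k)
          * ((∏ j ∈ Sᶜ, x j) ^ k * ∏ j ∈ (S.erase m).erase i, (1 - x j ^ k)) := by ring
    _ ≤ x m ^ k * R m * (1 - x i ^ k)
          * ((∏ j ∈ Sᶜ, x j) ^ k * ∏ j ∈ (S.erase m).erase i, (1 - x j ^ k)) :=
        mul_le_mul_of_nonneg_right key hcommon
    _ = _ := by ring

end ProductChannel

/-- One-sided fair, spatially independent channel: with `ε_1 ≥ … ≥ ε_N`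
(`0 < ε_j < 1`), `ε_I = ∏_{j∈I} ε_j`, positive rates `R` satisfying
`ε_1 R_1 ≥ … ≥ ε_N R_N`, for every nonempty `S` the maximum of `f^i_S R_i`
over `i ∈ S` is attained at the smallest index `m = min S`:
`f^m_S R_m ≥ f^i_S R_i` for every `i ∈ S`. -/
theorem stmt_16 {n : ℕ} (εi : Fin n → ℝ)
    (h0 : ∀ j, 0 < εi j) (h1 : ∀ j, εi j < 1)
    (hmono : ∀ j k : Fin n, j ≤ k → εi k ≤ εi j)
    (R : Fin n → ℝ) (hR : ∀ j, 0 < R j)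
    (hfair : ∀ j k : Fin n, j ≤ k → εi k * R k ≤ εi j * R j)
    (S : Finset (Fin n)) (hS : S.Nonempty) :
    ∀ i ∈ S, fcoef (fun I => ∏ j ∈ I, εi j) i S * R i
      ≤ fcoef (fun I => ∏ j ∈ I, εi j) (S.min' hS) S * R (S.min' hS) := by
  intro i hi
  have hmin : S.min' hS ≤ i := S.min'_le i hi
  have hx0 : ∀ j, 0 ≤ εi j := fun j => (h0 j).le
  have hx1 : ∀ j, εi j ≤ 1 := fun j => (h1 j).le
  exact hasSum_le
    (series_term_mul_le hx0 hx1 hi (S.min'_mem hS) (hmono _ _ hmin) (hfair _ _ hmin) (hR _).le)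
    ((hasSum_fcoef_prod hx0 hx1 (h1 i) S).mul_right (R i))
    ((hasSum_fcoef_prod hx0 hx1 (h1 _) S).mul_right _)
end
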